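/- arXiv:2604.09723 — 14 statements merged into one kernel-verified Lean document; each statement's English description precedes it below -/
import Mathlib

section
/- Let c : ℕ → ℚ satisfy the first π-kernel recurrence, and let s : ℕ → ℚ be its partial-sum sequence. Then for every natural number n: −(n+2)⁴·s_n + (5n⁴ + 42n³ + 130n² + 173n + 81)·s_{n+1} − (n+1)(8n³ + 62n² + 160n + 137)·s_{n+2} + 4(n+1)(n+2)(n+3)²·s_{n+3} = 0. -/
/-!
The coefficients of the order-3 operator sum to zero, so it annihilates the constant `s n`.
Writing `s (n + k) = s n + c (n + 1) + ⋯ + c (n + k)`, what remains is exactly the kernel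
recurrence at `n + 1`.
-/

theorem partialSum_succ {M : Type*} [AddCommMonoid M] {c s : ℕ → M}
    (hs : ∀ n : ℕ, s n = ∑ k ∈ Finset.range (n + 1), c k) (n : ℕ) :
    s (n + 1) = s n + c (n + 1) := by
  rw [hs, hs, Finset.sum_range_succ]

/-- If `c` satisfies the first π-kernel recurrence and `s` is its partial-sum sequence,
then `s` satisfies (4 times) the first printed order-3 recurrence for π. -/
theorem first_pi_order3_from_kernel (c s : ℕ → ℚ)
    (hc : ∀ n : ℕ, ((n : ℚ) + 1) ^ 4 * c n
        - (n : ℚ) * (2 * n + 3) * (2 * (n : ℚ) ^ 2 + 6 * n + 5) * c (n + 1)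
        + 4 * (n : ℚ) * ((n : ℚ) + 1) * ((n : ℚ) + 2) ^ 2 * c (n + 2) = 0)
    (hs : ∀ n : ℕ, s n = ∑ k ∈ Finset.range (n + 1), c k) :
    ∀ n : ℕ,
      -((n : ℚ) + 2) ^ 4 * s n
      + (5 * (n : ℚ) ^ 4 + 42 * (n : ℚ) ^ 3 + 130 * (n : ℚ) ^ 2 + 173 * n + 81) * s (n + 1)
      - ((n : ℚ) + 1) * (8 * (n : ℚ) ^ 3 + 62 * (n : ℚ) ^ 2 + 160 * n + 137) * s (n + 2)
      + 4 * ((n : ℚ) + 1) * ((n : ℚ) + 2) * ((n : ℚ) + 3) ^ 2 * s (n + 3) = 0 := by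
  intro n
  have kernel := hc (n + 1)
  push_cast at kernel
  rw [partialSum_succ hs (n + 2), partialSum_succ hs (n + 1), partialSum_succ hs n]
  linear_combination kernel
end

section
/- Let c : ℕ → ℚ satisfy the first π-kernel recurrence, and define u : ℕ → ℚ for n ≥ 1 by u_n = 4ⁿ·(n−1)!·(n!)²·c_n. Then for every natural number n ≥ 2: u_{n+1} = (2n+1)(2n² + 2n + 1)·u_n − 4n⁶·u_{n−1}. -/
/-! The inflation factor `w n = 4ⁿ·(n-1)!·(n!)²` satisfies `w (n+1) = 4n(n+1)²·w n`.
Multiplying the kernel recurrence at index `n - 1` by `4n²·w (n-1) = w n / (n-1)` turns each of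
its three terms into the corresponding term of the inflated recurrence for `u = w·c`. -/

open Nat

def piKernelInflationFactor (n : ℕ) : ℚ :=
  4 ^ n * ((n - 1)! : ℚ) * (n ! : ℚ) ^ 2

def IsFirstPiKernelSolution (c : ℕ → ℚ) : Prop :=
  ∀ n : ℕ, ((n : ℚ) + 1) ^ 4 * c n
    - (n : ℚ) * (2 * n + 3) * (2 * (n : ℚ) ^ 2 + 6 * n + 5) * c (n + 1)
    + 4 * (n : ℚ) * ((n : ℚ) + 1) * ((n : ℚ) + 2) ^ 2 * c (n + 2) = 0

lemma piKernelInflationFactor_add_two (m : ℕ) :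
    piKernelInflationFactor (m + 2)
      = 4 * ((m : ℚ) + 1) * ((m : ℚ) + 2) ^ 2 * piKernelInflationFactor (m + 1) := by
  simp only [piKernelInflationFactor, show m + 2 - 1 = m + 1 by omega, Nat.add_sub_cancel,
    factorial_succ]
  push_cast
  ring

lemma IsFirstPiKernelSolution.inflated_recurrence {c : ℕ → ℚ} (hc : IsFirstPiKernelSolution c)
    {n : ℕ} (hn : 2 ≤ n) :
    piKernelInflationFactor (n + 1) * c (n + 1)
      = (2 * (n : ℚ) + 1) * (2 * (n : ℚ) ^ 2 + 2 * n + 1) * (piKernelInflationFactor n * c n)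
        - 4 * (n : ℚ) ^ 6 * (piKernelInflationFactor (n - 1) * c (n - 1)) := by
  obtain ⟨m, rfl⟩ : ∃ m, n = m + 2 := ⟨n - 2, by omega⟩
  have hkernel := hc (m + 1)
  rw [show m + 2 - 1 = m + 1 by omega, piKernelInflationFactor_add_two (m + 1),
    piKernelInflationFactor_add_two m]
  push_cast at hkernel ⊢
  linear_combination 4 * ((m : ℚ) + 2) ^ 2 * piKernelInflationFactor (m + 1) * hkernel

/-- If `c` satisfies the first π-kernel recurrence and `u n = 4^n·(n-1)!·(n!)²·c n`
for `n ≥ 1`, then `u` satisfies the inflated recurrence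
`u (n+1) = (2n+1)(2n²+2n+1)·u n - 4n⁶·u (n-1)` for `n ≥ 2`,
i.e. the polynomial continued fraction `PCF((2n+1)(2n²+2n+1), -4n⁶)`. -/
theorem first_pi_kernel_inflation (c u : ℕ → ℚ)
    (hc : ∀ n : ℕ, ((n : ℚ) + 1) ^ 4 * c n
        - (n : ℚ) * (2 * n + 3) * (2 * (n : ℚ) ^ 2 + 6 * n + 5) * c (n + 1)
        + 4 * (n : ℚ) * ((n : ℚ) + 1) * ((n : ℚ) + 2) ^ 2 * c (n + 2) = 0)
    (hu : ∀ n : ℕ, 1 ≤ n →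
      u n = 4 ^ n * (Nat.factorial (n - 1) : ℚ) * (Nat.factorial n : ℚ) ^ 2 * c n) :
    ∀ n : ℕ, 2 ≤ n →
      u (n + 1) = (2 * (n : ℚ) + 1) * (2 * (n : ℚ) ^ 2 + 2 * n + 1) * u n
        - 4 * (n : ℚ) ^ 6 * u (n - 1) := by
  intro n hn
  rw [hu (n + 1) (by omega), hu n (by omega), hu (n - 1) (by omega)]
  exact IsFirstPiKernelSolution.inflated_recurrence hc hn
end

section
/- Let c : ℕ → ℚ satisfy the second π-kernel recurrence, and let s : ℕ → ℚ be its partial-sum sequence. Then for every natural number n: −(n+2)³(3n+7)(3n+10)·s_n − (3n+10)(27n⁴ + 240n³ + 789n² + 1128n + 584)·s_{n+1} − (3n+4)(3n+8)(6n³ + 57n² + 177n + 178)·s_{n+2} + 16(n+3)³(3n+4)(3n+7)·s_{n+3} = 0. -/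
/-! The target recurrence is the kernel recurrence at index `n + 1`, rewritten through
`c (k + 1) = s (k + 1) - s k`. -/

theorem sub_eq_of_eq_sum_range_succ {M : Type*} [AddCommGroup M] {c s : ℕ → M}
    (hs : ∀ n : ℕ, s n = ∑ k ∈ Finset.range (n + 1), c k) (n : ℕ) :
    c (n + 1) = s (n + 1) - s n := by
  rw [hs, hs, Finset.sum_range_succ, add_sub_cancel_left]

/-- If `c` satisfies the second π-kernel recurrence and `s` is its partial-sum sequence,
then `s` satisfies (144 times) the second printed order-3 recurrence for π. -/
theorem second_pi_order3_from_kernel (c s : ℕ → ℚ)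
    (hc : ∀ n : ℕ, ((n : ℚ) + 1) ^ 3 * (3 * n + 4) * (3 * n + 7) * c n
        + (2 * (n : ℚ) + 3) * (3 * n + 1) * (3 * n + 7)
            * (5 * (n : ℚ) ^ 2 + 15 * n + 12) * c (n + 1)
        + 16 * ((n : ℚ) + 2) ^ 3 * (3 * n + 1) * (3 * n + 4) * c (n + 2) = 0)
    (hs : ∀ n : ℕ, s n = ∑ k ∈ Finset.range (n + 1), c k) :
    ∀ n : ℕ,
      -((n : ℚ) + 2) ^ 3 * (3 * n + 7) * (3 * n + 10) * s n
      - (3 * (n : ℚ) + 10)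
          * (27 * (n : ℚ) ^ 4 + 240 * (n : ℚ) ^ 3 + 789 * (n : ℚ) ^ 2 + 1128 * n + 584)
          * s (n + 1)
      - (3 * (n : ℚ) + 4) * (3 * n + 8)
          * (6 * (n : ℚ) ^ 3 + 57 * (n : ℚ) ^ 2 + 177 * n + 178) * s (n + 2)
      + 16 * ((n : ℚ) + 3) ^ 3 * (3 * n + 4) * (3 * n + 7) * s (n + 3) = 0 := by
  intro n
  have key := hc (n + 1)
  rw [sub_eq_of_eq_sum_range_succ hs n, sub_eq_of_eq_sum_range_succ hs (n + 1),
    sub_eq_of_eq_sum_range_succ hs (n + 2)] at key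
  push_cast at key
  linear_combination key
end

section
/- Define A : ℕ → ℤ by A_n = ∑_{k=0}^n (binom(2k,k))²·(binom(2n−2k,n−k))². Then for every natural number n ≥ 1: (n+1)³·A_{n+1} = 8(2n+1)(2n² + 2n + 1)·A_n − 256·n³·A_{n−1}. -/
/-! Creative telescoping (Zeilberger). Write `c j` for the central binomial coefficient and
`F n (i, j) = c i ^ 2 * c j ^ 2` on the antidiagonal `i + j = n`, so that `A n = ∑ F n`. The
recurrence operator applied to `F` is, termwise, a difference `H (i + 1, j) - H (i, j + 1)` of a
rational certificate `H`; summed over an antidiagonal this telescopes to the two corner values,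
and these cancel against the terms of the longer sums that fall outside the antidiagonal. -/

open Finset Nat

theorem Finset.Nat.sum_antidiagonal_sub_shift {M : Type*} [AddCommGroup M] (f : ℕ × ℕ → M)
    (n : ℕ) :
    ∑ p ∈ antidiagonal n, (f (p.1 + 1, p.2) - f (p.1, p.2 + 1)) = f (n + 1, 0) - f (0, n + 1) := by
  have h₁ := Finset.Nat.sum_antidiagonal_succ (f := f) (n := n)
  have h₂ := Finset.Nat.sum_antidiagonal_succ' (f := f) (n := n)
  rw [sum_sub_distrib, sub_eq_sub_iff_add_eq_add, add_comm, ← h₁, h₂]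

theorem Nat.cast_centralBinom_succ {K : Type*} [Field K] [CharZero K] (j : ℕ) :
    (centralBinom (j + 1) : K) = 2 * (2 * j + 1) / (j + 1) * centralBinom j := by
  rw [div_mul_eq_mul_div, eq_div_iff (Nat.cast_add_one_ne_zero j), mul_comm]
  exact_mod_cast succ_mul_centralBinom_succ j

def centralBinomSqConv (n : ℕ) : ℚ :=
  ∑ p ∈ antidiagonal n, (centralBinom p.1 : ℚ) ^ 2 * (centralBinom p.2 : ℚ) ^ 2

theorem centralBinomSqConv_eq_sum_range (n : ℕ) :
    centralBinomSqConv n = ∑ k ∈ range (n + 1),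
      ((2 * k).choose k : ℚ) ^ 2 * ((2 * n - 2 * k).choose (n - k) : ℚ) ^ 2 := by
  rw [centralBinomSqConv, Finset.Nat.sum_antidiagonal_eq_sum_range_succ
    (fun i j ↦ (centralBinom i : ℚ) ^ 2 * (centralBinom j : ℚ) ^ 2)]
  refine sum_congr rfl fun k _ ↦ ?_
  rw [← Nat.mul_sub, centralBinom_eq_two_mul_choose, centralBinom_eq_two_mul_choose]

/-- Zeilberger's algorithm applied to `c k ^ 2 * c (n - k) ^ 2` produces this certificate. -/
def wzCertificate (p : ℕ × ℕ) : ℚ :=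
  let i : ℚ := p.1
  let s : ℚ := p.1 + p.2
  4 * i ^ 2 * ((s + 1) * (4 * s + 1) - 2 * i * (2 * s + 1))
    * (centralBinom p.1 : ℚ) ^ 2 * (centralBinom p.2 : ℚ) ^ 2 / (p.2 + 1) ^ 2

theorem wzCertificate_sub_shift {m i j : ℕ} (h : i + j = m) :
    let n : ℚ := m + 1
    (n + 1) ^ 3 * ((centralBinom i : ℚ) ^ 2 * (centralBinom (j + 2) : ℚ) ^ 2)
      - 8 * (2 * n + 1) * (2 * n ^ 2 + 2 * n + 1)
        * ((centralBinom i : ℚ) ^ 2 * (centralBinom (j + 1) : ℚ) ^ 2)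
      + 256 * n ^ 3 * ((centralBinom i : ℚ) ^ 2 * (centralBinom j : ℚ) ^ 2)
      = wzCertificate (i + 1, j) - wzCertificate (i, j + 1) := by
  subst h
  simp only [wzCertificate, cast_centralBinom_succ (K := ℚ)]
  push_cast
  field_simp
  ring

theorem centralBinomSqConv_recurrence (m : ℕ) :
    let n : ℚ := m + 1
    (n + 1) ^ 3 * centralBinomSqConv (m + 2)
      = 8 * (2 * n + 1) * (2 * n ^ 2 + 2 * n + 1) * centralBinomSqConv (m + 1)
        - 256 * n ^ 3 * centralBinomSqConv m := by
  intro n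
  have hsum := (sum_congr rfl fun p hp ↦ wzCertificate_sub_shift (mem_antidiagonal.mp hp)).trans
    (Finset.Nat.sum_antidiagonal_sub_shift wzCertificate m)
  rw [sum_add_distrib, sum_sub_distrib, ← mul_sum, ← mul_sum, ← mul_sum] at hsum
  rw [centralBinomSqConv, centralBinomSqConv, centralBinomSqConv, show m + 2 = m + 1 + 1 from rfl,
    Finset.Nat.sum_antidiagonal_succ', Finset.Nat.sum_antidiagonal_succ',
    Finset.Nat.sum_antidiagonal_succ']
  have corner : wzCertificate (m + 1, 0) - wzCertificate (0, m + 1)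
      = 4 * ((m : ℚ) + 1) ^ 2 * (3 * m + 4) * (centralBinom (m + 1) : ℚ) ^ 2 := by
    simp only [wzCertificate, centralBinom_zero]
    push_cast
    ring
  have step : ((m : ℚ) + 2) * centralBinom (m + 2) = 2 * (2 * m + 3) * centralBinom (m + 1) := by
    exact_mod_cast succ_mul_centralBinom_succ (m + 1)
  rw [corner] at hsum
  simp only [centralBinom_zero, show centralBinom 1 = 2 from rfl, add_assoc, Nat.reduceAdd,
    Nat.cast_one, Nat.cast_ofNat] at hsum ⊢
  linear_combination hsum
    + ((m : ℚ) + 2) * (((m : ℚ) + 2) * centralBinom (m + 2) + 2 * (2 * m + 3) * centralBinom (m + 1))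
      * step

/-- The sequence `A n = ∑_{k=0}^n binom(2k,k)²·binom(2n-2k,n-k)²` (OEIS A036917)
satisfies `(n+1)³·A(n+1) = 8(2n+1)(2n²+2n+1)·A n - 256·n³·A(n-1)` for `n ≥ 1`. -/
theorem A036917_recurrence
    (A : ℕ → ℤ)
    (hA : ∀ n : ℕ, A n = ∑ k ∈ Finset.range (n + 1),
      ((2 * k).choose k : ℤ) ^ 2 * ((2 * n - 2 * k).choose (n - k) : ℤ) ^ 2) :
    ∀ n : ℕ, 1 ≤ n →
      ((n : ℤ) + 1) ^ 3 * A (n + 1)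
        = 8 * (2 * (n : ℤ) + 1) * (2 * (n : ℤ) ^ 2 + 2 * n + 1) * A n
          - 256 * (n : ℤ) ^ 3 * A (n - 1) := by
  intro n hn
  obtain ⟨m, rfl⟩ := Nat.exists_eq_add_of_le' hn
  have hS (k : ℕ) : (A k : ℚ) = centralBinomSqConv k := by
    rw [hA, centralBinomSqConv_eq_sum_range]
    push_cast
    rfl
  qify
  rw [hS, hS, Nat.add_sub_cancel, hS]
  linear_combination centralBinomSqConv_recurrence m
end

section
/- For every natural number n: ∑_{k=0}^n (binom(2k,k))²·(binom(2n−2k,n−k))² = ∑_{m=0}^n (binom(2m,m))³·(−16)^{n−m}·binom(m, n−m), where binom(m, n−m) = 0 whenever n−m > m. Both sides are integers. -/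
/-!
Creative telescoping. Both sides, as sequences in `n`, satisfy the recurrence
`(n+2)³ aₙ₊₂ = 8(2n+3)(2n²+6n+5) aₙ₊₁ - 256(n+1)³ aₙ`, and they agree at `n = 0, 1`.
For each side the recurrence holds summand by summand up to a difference `G (k+1) - G k`,
with an explicit certificate `G` of the kind produced by Zeilberger's algorithm; after
expressing all shifted central binomial and binomial coefficients as rational multiples of a
single one, that summand-wise identity is a rational-function identity.
-/

open Finset Nat

section Recurrence

def rowSum {M : Type*} [AddCommMonoid M] (F : ℕ → ℕ → M) (n : ℕ) : M :=
  ∑ k ∈ range (n + 1), F n k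

theorem rowSum_eq_sum_range {M : Type*} [AddCommMonoid M] {F : ℕ → ℕ → M}
    (hF : ∀ n k, n < k → F n k = 0) {n N : ℕ} (hN : n < N) :
    rowSum F n = ∑ k ∈ range N, F n k :=
  sum_subset (range_subset_range.2 hN) fun k _ hk ↦ hF n k (by simpa using hk)

variable {K : Type*} [CommRing K]

theorem rowSum_recurrence_of_telescoping {p q r : ℕ → K} {F G : ℕ → ℕ → K}
    (hF : ∀ n k, n < k → F n k = 0) (hG₀ : ∀ n, G n 0 = 0) (hG : ∀ n, G n (n + 3) = 0)
    (hFG : ∀ n k, p n * F (n + 2) k - q n * F (n + 1) k + r n * F n k = G n (k + 1) - G n k)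
    (n : ℕ) : p n * rowSum F (n + 2) = q n * rowSum F (n + 1) - r n * rowSum F n := by
  rw [rowSum_eq_sum_range hF (show n + 2 < n + 3 by omega),
    rowSum_eq_sum_range hF (show n + 1 < n + 3 by omega),
    rowSum_eq_sum_range hF (show n < n + 3 by omega), ← sub_eq_zero]
  calc _ = ∑ k ∈ range (n + 3), (G n (k + 1) - G n k) := by
        simp only [← hFG, mul_sum, sum_add_distrib, sum_sub_distrib]; ring
    _ = 0 := by rw [sum_range_sub, hG, hG₀, sub_zero]

theorem eq_of_three_term_recurrence [IsDomain K] {p q r a b : ℕ → K} (hp : ∀ n, p n ≠ 0)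
    (ha : ∀ n, p n * a (n + 2) = q n * a (n + 1) - r n * a n)
    (hb : ∀ n, p n * b (n + 2) = q n * b (n + 1) - r n * b n)
    (h₀ : a 0 = b 0) (h₁ : a 1 = b 1) : a = b := by
  have key : ∀ n, a n = b n ∧ a (n + 1) = b (n + 1) := by
    intro n
    induction n with
    | zero => exact ⟨h₀, h₁⟩
    | succ n ih => exact ⟨ih.2, mul_left_cancel₀ (hp n) (by rw [ha, hb, ih.1, ih.2])⟩
  exact funext fun n ↦ (key n).1

end Recurrence

namespace Nat

theorem cast_centralBinom_succ_s6 (m : ℕ) :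
    ((m + 1).centralBinom : ℚ) = 2 * (2 * m + 1) / (m + 1) * m.centralBinom := by
  rw [div_mul_eq_mul_div, eq_div_iff (by positivity), mul_comm]
  exact_mod_cast succ_mul_centralBinom_succ m

theorem cast_choose_succ_right (m j : ℕ) :
    (m.choose (j + 1) : ℚ) = (m - j) / (j + 1) * m.choose j := by
  rw [div_mul_eq_mul_div, eq_div_iff (by positivity)]
  rcases le_or_gt j m with h | h
  · rw [mul_comm _ (m.choose j : ℚ), ← Nat.cast_sub h]
    exact_mod_cast choose_succ_right_eq m j
  · simp [choose_eq_zero_of_lt h, choose_eq_zero_of_lt (h.trans (lt_add_one j))]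

theorem cast_mul_choose_pred (m j : ℕ) :
    (m : ℚ) * (m - 1).choose j = (m - j) * m.choose j := by
  rcases m with _ | m
  · rcases j with _ | j <;> simp
  rcases le_or_gt j (m + 1) with h | h
  · rw [← Nat.cast_sub h, add_tsub_cancel_right, mul_comm, mul_comm ((m + 1 - j : ℕ) : ℚ)]
    exact_mod_cast choose_mul_succ_eq m j
  · simp [choose_eq_zero_of_lt h, choose_eq_zero_of_lt (lt_of_le_of_lt (le_succ m) h)]

end Nat

def cauchySquareTerm (n k : ℕ) : ℚ :=
  if k ≤ n then (k.centralBinom : ℚ) ^ 2 * ((n - k).centralBinom : ℚ) ^ 2 else 0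

/-- At `k = n + 1` this is the value of the first branch once `binom(2j, j)` is extended by `0`
to `j = -1`. -/
def cauchySquareCert (n k : ℕ) : ℚ :=
  if k ≤ n then
    (k : ℚ) ^ 2 * k.centralBinom ^ 2 * (16 * (3 * n - 2 * k + 1) * (n - k).centralBinom ^ 2
      + (2 * k - 3 * n - 3) * (n - k + 1).centralBinom ^ 2)
  else if k = n + 1 then -((n : ℚ) + 1) ^ 3 * (n + 1).centralBinom ^ 2
  else 0

theorem cauchySquareTerm_telescopes (n k : ℕ) :
    ((n : ℚ) + 2) ^ 3 * cauchySquareTerm (n + 2) k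
      - 8 * (2 * n + 3) * (2 * n ^ 2 + 6 * n + 5) * cauchySquareTerm (n + 1) k
      + 256 * ((n : ℚ) + 1) ^ 3 * cauchySquareTerm n k
      = cauchySquareCert (n + 1) (k + 1) - cauchySquareCert (n + 1) k := by
  rcases le_or_gt k n with hk | hk
  · obtain ⟨i, rfl⟩ := Nat.exists_eq_add_of_le hk
    simp only [cauchySquareTerm, cauchySquareCert, if_pos (by omega : k ≤ k + i + 2),
      if_pos (by omega : k ≤ k + i + 1), if_pos hk, if_pos (by omega : k + 1 ≤ k + i + 1),
      show k + i + 2 - k = i + 1 + 1 by omega, show k + i + 1 - k = i + 1 by omega,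
      show k + i - k = i by omega, show k + i + 1 - (k + 1) = i by omega,
      cast_centralBinom_succ_s6]
    push_cast
    field_simp
    ring
  obtain rfl | rfl | hk := show k = n + 1 ∨ k = n + 2 ∨ n + 2 < k by omega
  · simp only [cauchySquareTerm, cauchySquareCert, if_pos (by omega : n + 1 ≤ n + 2),
      if_pos le_rfl, if_neg (by omega : ¬n + 1 ≤ n), if_neg (by omega : ¬n + 1 + 1 ≤ n + 1),
      show n + 2 - (n + 1) = 0 + 1 by omega, Nat.sub_self, cast_centralBinom_succ_s6,
      centralBinom_zero]
    push_cast
    field_simp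
    ring
  · simp [cauchySquareTerm, cauchySquareCert, add_assoc, one_add_one_eq_two]
  · simp [cauchySquareTerm, cauchySquareCert, show ¬k ≤ n + 2 by omega,
      show ¬k ≤ n + 1 by omega, show ¬k ≤ n by omega, show k ≠ n + 1 by omega,
      show k ≠ n + 1 + 1 by omega]

def pullbackTerm (n m : ℕ) : ℚ :=
  if m ≤ n then (m.centralBinom : ℚ) ^ 3 * (-16) ^ (n - m) * m.choose (n - m) else 0

def pullbackCert (n m : ℕ) : ℚ :=
  if m ≤ n then
    16 * (m : ℚ) ^ 3 * m.centralBinom ^ 3 * (-16) ^ (n - m)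
      * ((m - 1).choose (n - m + 1) + 2 * (m - 1).choose (n - m))
  else if m = n + 1 then -((n : ℚ) + 1) ^ 3 * (n + 1).centralBinom ^ 3
  else 0

theorem pullbackTerm_telescopes (n m : ℕ) :
    ((n : ℚ) + 2) ^ 3 * pullbackTerm (n + 2) m
      - 8 * (2 * n + 3) * (2 * n ^ 2 + 6 * n + 5) * pullbackTerm (n + 1) m
      + 256 * ((n : ℚ) + 1) ^ 3 * pullbackTerm n m
      = pullbackCert (n + 1) (m + 1) - pullbackCert (n + 1) m := by
  rcases le_or_gt m n with hm | hm
  · obtain ⟨i, rfl⟩ := Nat.exists_eq_add_of_le hm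
    -- removes the binomials `(m - 1).choose _`, whose ratio to `m.choose _` is singular at `m = 0`
    have hcert : pullbackCert (m + i + 1) m
        = 16 * (m : ℚ) ^ 2 * m.centralBinom ^ 3 * (-16) ^ (i + 1)
          * ((m - (i + 2)) * m.choose (i + 2) + 2 * (m - (i + 1)) * m.choose (i + 1)) := by
      rw [pullbackCert, if_pos (by omega), show m + i + 1 - m = i + 1 by omega]
      linear_combination (norm := (push_cast; ring))
        16 * (m : ℚ) ^ 2 * m.centralBinom ^ 3 * (-16) ^ (i + 1)
          * (cast_mul_choose_pred m (i + 2) + 2 * cast_mul_choose_pred m (i + 1))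
    rw [hcert]
    simp only [pullbackTerm, pullbackCert, if_pos (by omega : m ≤ m + i + 2),
      if_pos (by omega : m ≤ m + i + 1), if_pos hm, if_pos (by omega : m + 1 ≤ m + i + 1),
      show m + i + 2 - m = i + 1 + 1 by omega, show m + i + 1 - m = i + 1 by omega,
      show m + i - m = i by omega, show m + i + 1 - (m + 1) = i by omega, add_tsub_cancel_right,
      cast_centralBinom_succ_s6, cast_choose_succ_right]
    push_cast
    field_simp
    ring
  obtain rfl | rfl | hm := show m = n + 1 ∨ m = n + 2 ∨ n + 2 < m by omega
  · simp only [pullbackTerm, pullbackCert, if_pos (by omega : n + 1 ≤ n + 2), if_pos le_rfl,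
      if_neg (by omega : ¬n + 1 ≤ n), if_neg (by omega : ¬n + 1 + 1 ≤ n + 1),
      show n + 2 - (n + 1) = 1 by omega, Nat.sub_self, add_tsub_cancel_right, zero_add,
      choose_one_right, choose_zero_right, cast_centralBinom_succ_s6]
    push_cast
    field_simp
    ring
  · simp [pullbackTerm, pullbackCert, add_assoc, one_add_one_eq_two]
  · simp [pullbackTerm, pullbackCert, show ¬m ≤ n + 2 by omega, show ¬m ≤ n + 1 by omega,
      show ¬m ≤ n by omega, show m ≠ n + 1 by omega, show m ≠ n + 1 + 1 by omega]

theorem rowSum_cauchySquareTerm_recurrence (n : ℕ) :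
    ((n : ℚ) + 2) ^ 3 * rowSum cauchySquareTerm (n + 2)
      = 8 * (2 * n + 3) * (2 * n ^ 2 + 6 * n + 5) * rowSum cauchySquareTerm (n + 1)
        - 256 * ((n : ℚ) + 1) ^ 3 * rowSum cauchySquareTerm n :=
  rowSum_recurrence_of_telescoping (F := cauchySquareTerm)
    (G := fun n k ↦ cauchySquareCert (n + 1) k) (p := fun n ↦ ((n : ℚ) + 2) ^ 3)
    (q := fun n ↦ (8 : ℚ) * (2 * n + 3) * (2 * n ^ 2 + 6 * n + 5))
    (r := fun n ↦ 256 * ((n : ℚ) + 1) ^ 3) (fun _ _ h ↦ if_neg (not_le.2 h))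
    (fun _ ↦ by simp [cauchySquareCert])
    (fun n ↦ by simp [cauchySquareCert, show ¬n + 3 ≤ n + 1 by omega])
    cauchySquareTerm_telescopes n

theorem rowSum_pullbackTerm_recurrence (n : ℕ) :
    ((n : ℚ) + 2) ^ 3 * rowSum pullbackTerm (n + 2)
      = 8 * (2 * n + 3) * (2 * n ^ 2 + 6 * n + 5) * rowSum pullbackTerm (n + 1)
        - 256 * ((n : ℚ) + 1) ^ 3 * rowSum pullbackTerm n :=
  rowSum_recurrence_of_telescoping (F := pullbackTerm)
    (G := fun n k ↦ pullbackCert (n + 1) k) (p := fun n ↦ ((n : ℚ) + 2) ^ 3)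
    (q := fun n ↦ (8 : ℚ) * (2 * n + 3) * (2 * n ^ 2 + 6 * n + 5))
    (r := fun n ↦ 256 * ((n : ℚ) + 1) ^ 3) (fun _ _ h ↦ if_neg (not_le.2 h))
    (fun _ ↦ by simp [pullbackCert])
    (fun n ↦ by simp [pullbackCert, show ¬n + 3 ≤ n + 1 by omega])
    pullbackTerm_telescopes n

theorem rowSum_cauchySquareTerm_eq_rowSum_pullbackTerm :
    rowSum cauchySquareTerm = rowSum pullbackTerm :=
  eq_of_three_term_recurrence (fun n ↦ by positivity) rowSum_cauchySquareTerm_recurrence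
    rowSum_pullbackTerm_recurrence (by simp [rowSum, cauchySquareTerm, pullbackTerm])
    (by norm_num [rowSum, sum_range_succ, cauchySquareTerm, pullbackTerm,
      centralBinom_eq_two_mul_choose])

/-- Coefficient-level form of the Clausen-type pullback identity
`₂F₁(1/2,1/2;1;16x)² = ₃F₂(1/2,1/2,1/2;1,1;64x(1-16x))`:
for every `n`,
`∑_{k=0}^n binom(2k,k)²·binom(2n-2k,n-k)²
  = ∑_{m=0}^n binom(2m,m)³·(-16)^(n-m)·binom(m,n-m)`,
where `binom(m,n-m) = 0` whenever `n-m > m`. -/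
theorem clausen_pullback_coefficients (n : ℕ) :
    (∑ k ∈ Finset.range (n + 1),
        ((2 * k).choose k : ℤ) ^ 2 * ((2 * n - 2 * k).choose (n - k) : ℤ) ^ 2)
      = ∑ m ∈ Finset.range (n + 1),
        ((2 * m).choose m : ℤ) ^ 3 * (-16 : ℤ) ^ (n - m) * (m.choose (n - m) : ℤ) := by
  have hlhs : rowSum cauchySquareTerm n = ∑ k ∈ range (n + 1),
      ((2 * k).choose k : ℚ) ^ 2 * ((2 * n - 2 * k).choose (n - k) : ℚ) ^ 2 := by
    refine sum_congr rfl fun k hk ↦ ?_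
    rw [cauchySquareTerm, if_pos (Nat.lt_succ_iff.1 (mem_range.1 hk)),
      centralBinom_eq_two_mul_choose, centralBinom_eq_two_mul_choose, Nat.mul_sub]
  have hrhs : rowSum pullbackTerm n = ∑ m ∈ range (n + 1),
      ((2 * m).choose m : ℚ) ^ 3 * (-16 : ℚ) ^ (n - m) * (m.choose (n - m) : ℚ) := by
    refine sum_congr rfl fun m hm ↦ ?_
    rw [pullbackTerm, if_pos (Nat.lt_succ_iff.1 (mem_range.1 hm)), centralBinom_eq_two_mul_choose]
  apply Int.cast_injective (α := ℚ)
  push_cast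
  rw [← hlhs, ← hrhs, rowSum_cauchySquareTerm_eq_rowSum_pullbackTerm]
end

section
/- Define A : ℕ → ℤ by A_n = ∑_{k=0}^n (binom(2k,k))²·(binom(2n−2k,n−k))², and define c : ℕ → ℚ by c_n = n·A_n/32ⁿ. Then c satisfies the first π-kernel recurrence: for every natural number n, (n+1)⁴·c_n − n(2n+3)(2n²+6n+5)·c_{n+1} + 4n(n+1)(n+2)²·c_{n+2} = 0. -/
/-!
Write `β m = (2m choose m)²`, so that `A n = ∑ₖ β k β (n-k)`. Zeilberger's creative
telescoping applied to the summand `β k β (n-k)` yields the Apéry-like recurrence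
`(n+2)³ A(n+2) - 8(2n+3)(2n²+6n+5) A(n+1) + 256(n+1)³ A n = 0`: the operator applied to the
summand at `k` is `G(n,k+1) - G(n,k)` for an explicit rational multiple `G` of the summand, and
the sum telescopes up to boundary terms at `k = n, n+1, n+2`, which cancel. After substituting
`c n = n A n / 32ⁿ`, the stated combination is `4n(n+1)/32^(n+2)` times this recurrence.
-/

open Finset Nat

namespace A036917

def centralBinomSq (m : ℕ) : ℚ := (centralBinom m : ℚ) ^ 2

local notation "β" => centralBinomSq

@[simp] lemma centralBinomSq_zero : β 0 = 1 := by simp [centralBinomSq]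

@[simp] lemma centralBinomSq_one : β 1 = 4 := by norm_num [centralBinomSq, centralBinom]

lemma centralBinomSq_succ (m : ℕ) :
    β (m + 1) = 4 * (2 * m + 1) ^ 2 * β m / (m + 1) ^ 2 := by
  have h : ((m : ℚ) + 1) * centralBinom (m + 1) = 2 * (2 * m + 1) * centralBinom m := by
    exact_mod_cast succ_mul_centralBinom_succ m
  rw [eq_div_iff (by positivity), centralBinomSq, centralBinomSq]
  linear_combination (((m : ℚ) + 1) * centralBinom (m + 1) + 2 * (2 * m + 1) * centralBinom m) * h

def a036917 (n : ℕ) : ℚ := ∑ k ∈ range (n + 1), β k * β (n - k)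

def recurrenceOp (u : ℕ → ℚ) (n : ℕ) : ℚ :=
  (n + 2) ^ 3 * u (n + 2) - 8 * (2 * n + 3) * (2 * n ^ 2 + 6 * n + 5) * u (n + 1)
    + 256 * (n + 1) ^ 3 * u n

-- Found by Zeilberger's algorithm; `zeilbergerCert n k` is the certificate `G(n,k)`.
def certPoly (n k : ℚ) : ℚ :=
  160 - 736 * k + 1024 * k ^ 2 - 384 * k ^ 3
    + n * (848 - 2560 * k + 1856 * k ^ 2 - 256 * k ^ 3)
    + n ^ 2 * (1536 - 2560 * k + 768 * k ^ 2)
    + n ^ 3 * (1088 - 768 * k) + 256 * n ^ 4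

def zeilbergerCert (n k : ℕ) : ℚ :=
  β k * β (n - k) * (k ^ 2 * certPoly n k) / (((n - k : ℕ) + 1) ^ 2 * ((n - k : ℕ) + 2) ^ 2)

lemma zeilbergerCert_zero (n : ℕ) : zeilbergerCert n 0 = 0 := by simp [zeilbergerCert]

lemma recurrenceOp_summand_eq_sub (k m : ℕ) :
    recurrenceOp (fun N ↦ β k * β (N - k)) (k + m + 1) =
      zeilbergerCert (k + m + 1) (k + 1) - zeilbergerCert (k + m + 1) k := by
  simp only [recurrenceOp, zeilbergerCert, show k + m + 1 + 2 - k = m + 3 by omega,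
    show k + m + 1 + 1 - k = m + 2 by omega, show k + m + 1 - k = m + 1 by omega,
    show k + m + 1 - (k + 1) = m by omega, centralBinomSq_succ, certPoly]
  push_cast
  field_simp
  ring

lemma sum_recurrenceOp_summand (n : ℕ) :
    ∑ k ∈ range n, recurrenceOp (fun N ↦ β k * β (N - k)) n = zeilbergerCert n n := by
  rw [← sub_zero (zeilbergerCert n n), ← zeilbergerCert_zero n, ← sum_range_sub]
  refine sum_congr rfl fun k hk ↦ ?_
  obtain ⟨m, rfl⟩ : ∃ m, n = k + m + 1 := ⟨n - k - 1, by grind⟩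
  exact recurrenceOp_summand_eq_sub k m

lemma recurrenceOp_a036917_eq (n : ℕ) :
    recurrenceOp a036917 n =
      ∑ k ∈ range n, recurrenceOp (fun N ↦ β k * β (N - k)) n
        + recurrenceOp (fun N ↦ β n * β (N - n)) n
        + (n + 2) ^ 3 * (4 * β (n + 1) + β (n + 2))
        - 8 * (2 * n + 3) * (2 * n ^ 2 + 6 * n + 5) * β (n + 1) := by
  simp only [recurrenceOp, a036917, sum_range_succ, Nat.sub_self,
    show n + 2 - (n + 1) = 1 by omega, show n + 1 - (n + 1) = 0 by omega,
    show n + 2 - (n + 2) = 0 by omega, show n + 2 - n = 2 by omega, show n + 1 - n = 1 by omega,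
    sum_add_distrib, sum_sub_distrib, ← mul_sum, centralBinomSq_zero, centralBinomSq_one]
  ring

lemma recurrenceOp_a036917 (n : ℕ) : recurrenceOp a036917 n = 0 := by
  rw [recurrenceOp_a036917_eq, sum_recurrenceOp_summand]
  simp only [recurrenceOp, zeilbergerCert, certPoly, Nat.sub_self, show n + 2 - n = 2 by omega,
    show n + 1 - n = 1 by omega, centralBinomSq_succ, centralBinomSq_zero]
  push_cast
  field_simp
  ring

lemma rescaled_recurrence (u c : ℕ → ℚ) (hc : ∀ n, c n = n * u n / 32 ^ n) (n : ℕ) :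
    ((n : ℚ) + 1) ^ 4 * c n
      - (n : ℚ) * (2 * n + 3) * (2 * (n : ℚ) ^ 2 + 6 * n + 5) * c (n + 1)
      + 4 * (n : ℚ) * ((n : ℚ) + 1) * ((n : ℚ) + 2) ^ 2 * c (n + 2) =
        4 * n * (n + 1) / 32 ^ (n + 2) * recurrenceOp u n := by
  simp only [hc, recurrenceOp, pow_succ]
  push_cast
  field_simp
  ring

lemma a036917_eq_intCast_sum_choose (n : ℕ) :
    a036917 n = ((∑ k ∈ range (n + 1),
      ((2 * k).choose k : ℤ) ^ 2 * ((2 * n - 2 * k).choose (n - k) : ℤ) ^ 2 : ℤ) : ℚ) := by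
  push_cast
  refine sum_congr rfl fun k _ ↦ ?_
  rw [show 2 * n - 2 * k = 2 * (n - k) by omega]
  simp [centralBinomSq, centralBinom]

end A036917

/-- The rescaling `c n = n·A n/32ⁿ` of the sequence A036917
satisfies the first π-kernel recurrence. -/
theorem A036917_rescaled_is_first_pi_kernel
    (A : ℕ → ℤ)
    (hA : ∀ n : ℕ, A n = ∑ k ∈ Finset.range (n + 1),
      ((2 * k).choose k : ℤ) ^ 2 * ((2 * n - 2 * k).choose (n - k) : ℤ) ^ 2)
    (c : ℕ → ℚ)
    (hc : ∀ n : ℕ, c n = (n : ℚ) * (A n : ℚ) / 32 ^ n) :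
    ∀ n : ℕ, ((n : ℚ) + 1) ^ 4 * c n
      - (n : ℚ) * (2 * n + 3) * (2 * (n : ℚ) ^ 2 + 6 * n + 5) * c (n + 1)
      + 4 * (n : ℚ) * ((n : ℚ) + 1) * ((n : ℚ) + 2) ^ 2 * c (n + 2) = 0 := by
  have hA' : ∀ n, (A n : ℚ) = A036917.a036917 n := fun n ↦ by
    rw [hA, A036917.a036917_eq_intCast_sum_choose]
  intro n
  rw [A036917.rescaled_recurrence _ c (fun m ↦ by rw [hc, hA']), A036917.recurrenceOp_a036917,
    mul_zero]
end

section
/- Let c : ℕ → ℚ satisfy the second π-kernel recurrence, and define u : ℕ → ℚ by u_n = (−32)ⁿ·c_n/(3n+1). Then for every natural number n ≥ 1: (n+1)³·u_{n+1} = 2(2n+1)(5n² + 5n + 2)·u_n − 64·n³·u_{n−1}. -/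
/-!
Writing `c n = (3n+1)·(-1/32)ⁿ·u n`, every term of the π-kernel recurrence at `n` acquires the
common factor `(3n+1)(3n+4)(3n+7)`; after cancelling it and the powers of `-32`, what is left is
the Domb recurrence for `u` at `n + 1`.
-/

def piKernelOperator (c : ℕ → ℚ) (n : ℕ) : ℚ :=
  ((n : ℚ) + 1) ^ 3 * (3 * n + 4) * (3 * n + 7) * c n
    + (2 * (n : ℚ) + 3) * (3 * n + 1) * (3 * n + 7) * (5 * (n : ℚ) ^ 2 + 15 * n + 12) * c (n + 1)
    + 16 * ((n : ℚ) + 2) ^ 3 * (3 * n + 1) * (3 * n + 4) * c (n + 2)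

/-- The Domb recurrence, shifted so that `dombOperator u n = 0` is its instance at `n + 1`. -/
def dombOperator (u : ℕ → ℚ) (n : ℕ) : ℚ :=
  ((n : ℚ) + 2) ^ 3 * u (n + 2)
    - 2 * (2 * (n : ℚ) + 3) * (5 * (n : ℚ) ^ 2 + 15 * n + 12) * u (n + 1)
    + 64 * ((n : ℚ) + 1) ^ 3 * u n

theorem piKernelOperator_mul_eq_dombOperator (c u : ℕ → ℚ)
    (hcu : ∀ n : ℕ, (-32 : ℚ) ^ n * c n = (3 * n + 1) * u n) (n : ℕ) :
    (-32 : ℚ) ^ (n + 2) * piKernelOperator c n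
      = 16 * (3 * (n : ℚ) + 1) * (3 * n + 4) * (3 * n + 7) * dombOperator u n := by
  unfold piKernelOperator dombOperator
  have h₁ := hcu (n + 1)
  have h₂ := hcu (n + 2)
  push_cast at h₁ h₂
  linear_combination
    1024 * ((n : ℚ) + 1) ^ 3 * (3 * n + 4) * (3 * n + 7) * hcu n
      - 32 * (2 * (n : ℚ) + 3) * (3 * n + 1) * (3 * n + 7) * (5 * (n : ℚ) ^ 2 + 15 * n + 12) * h₁
      + 16 * ((n : ℚ) + 2) ^ 3 * (3 * n + 1) * (3 * n + 4) * h₂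

theorem dombOperator_eq_zero_of_piKernelOperator_eq_zero (c u : ℕ → ℚ)
    (hcu : ∀ n : ℕ, (-32 : ℚ) ^ n * c n = (3 * n + 1) * u n) {n : ℕ}
    (hc : piKernelOperator c n = 0) : dombOperator u n = 0 := by
  have h := piKernelOperator_mul_eq_dombOperator c u hcu n
  rw [hc, mul_zero, eq_comm] at h
  have hfactor : 16 * (3 * (n : ℚ) + 1) * (3 * n + 4) * (3 * n + 7) ≠ 0 := by positivity
  exact (mul_eq_zero.mp h).resolve_left hfactor

/-- If `c` satisfies the second π-kernel recurrence, then `u n = (-32)ⁿ·c n/(3n+1)`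
satisfies the Domb-number recurrence
`(n+1)³·u(n+1) = 2(2n+1)(5n²+5n+2)·u n - 64·n³·u(n-1)` (OEIS A002895). -/
theorem second_pi_kernel_is_domb (c u : ℕ → ℚ)
    (hc : ∀ n : ℕ, ((n : ℚ) + 1) ^ 3 * (3 * n + 4) * (3 * n + 7) * c n
        + (2 * (n : ℚ) + 3) * (3 * n + 1) * (3 * n + 7)
            * (5 * (n : ℚ) ^ 2 + 15 * n + 12) * c (n + 1)
        + 16 * ((n : ℚ) + 2) ^ 3 * (3 * n + 1) * (3 * n + 4) * c (n + 2) = 0)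
    (hu : ∀ n : ℕ, u n = (-32 : ℚ) ^ n * c n / (3 * (n : ℚ) + 1)) :
    ∀ n : ℕ, 1 ≤ n →
      ((n : ℚ) + 1) ^ 3 * u (n + 1)
        = 2 * (2 * (n : ℚ) + 1) * (5 * (n : ℚ) ^ 2 + 5 * n + 2) * u n
          - 64 * (n : ℚ) ^ 3 * u (n - 1) := by
  have hcu : ∀ n : ℕ, (-32 : ℚ) ^ n * c n = (3 * n + 1) * u n := fun n => by
    rw [hu n, mul_div_cancel₀ _ (by positivity)]
  intro n hn
  obtain ⟨m, rfl⟩ := Nat.exists_eq_add_of_le' hn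
  have hdomb := dombOperator_eq_zero_of_piKernelOperator_eq_zero c u hcu (hc m)
  unfold dombOperator at hdomb
  rw [Nat.add_sub_cancel]
  push_cast
  linear_combination hdomb
end

section
/- Define g : ℕ → ℚ by g_n = ∑_{k=0}^n 1/((2k+1)(2(n−k)+1)), and define c : ℕ → ℚ by c_n = (n+1)!/(2·(2n+1)!!)·g_n, where (2n+1)!! is the odd double factorial. Then c satisfies the Catalan kernel recurrence: for every natural number n, (n+1)(n+2)·c_n − 4(n+2)²·c_{n+1} + (2n+5)²·c_{n+2} = 0. -/
/-!
Splitting `1/((2k+1)(2(n-k)+1))` into partial fractions and reflecting `k ↦ n - k` gives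
`g n = H n / (n+1)` with `H n = ∑_{k ≤ n} 1/(2k+1)`, so `c n = a n · H n` with
`a n = n!/(2·(2n+1)!!)`. The ratio `a (n+1) / a n = (n+1)/(2n+3)` makes `a` itself a solution
of the recurrence, and the increment `H (n+1) - H n = 1/(2n+3)` is exactly what the second
solution `a · H` needs.
-/

open Finset Nat

variable {K : Type*} [Field K]

variable (K) in
def oddHarmonic (n : ℕ) : K :=
  ∑ k ∈ range (n + 1), 1 / (2 * (k : K) + 1)

theorem oddHarmonic_succ (n : ℕ) :
    oddHarmonic K (n + 1) = oddHarmonic K n + 1 / (2 * (n : K) + 3) := by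
  rw [oddHarmonic, sum_range_succ, ← oddHarmonic]
  push_cast
  ring

theorem two_mul_sub_add_one_ne_zero [CharZero K] {n k : ℕ} (hk : k ≤ n) : 2 * ((n : K) - k) + 1 ≠ 0 := by
  have : 2 * ((n : K) - k) + 1 = ((2 * (n - k) + 1 : ℕ) : K) := by push_cast [hk]; ring
  rw [this]
  exact Nat.cast_ne_zero.mpr (Nat.succ_ne_zero _)

theorem sum_one_div_odd_mul_odd_reflect [CharZero K] (n : ℕ) :
    ∑ k ∈ range (n + 1), 1 / ((2 * (k : K) + 1) * (2 * ((n : K) - k) + 1)) =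
      oddHarmonic K n / (n + 1) := by
  have partial_fractions : ∀ k ∈ range (n + 1),
      1 / ((2 * (k : K) + 1) * (2 * ((n : K) - k) + 1)) =
        (1 / (2 * (k : K) + 1) + 1 / (2 * ((n : K) - k) + 1)) / (2 * (n + 1)) := by
    intro k hk
    have h₁ : 2 * (k : K) + 1 ≠ 0 := by exact_mod_cast Nat.succ_ne_zero (2 * k)
    have h₂ := two_mul_sub_add_one_ne_zero (K := K) (mem_range_succ_iff.mp hk)
    have h₃ : (n : K) + 1 ≠ 0 := Nat.cast_add_one_ne_zero n
    field_simp
    ring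
  have reflect : ∑ k ∈ range (n + 1), 1 / (2 * ((n : K) - k) + 1) = oddHarmonic K n := by
    rw [oddHarmonic, ← sum_range_reflect (fun k => 1 / (2 * (k : K) + 1))]
    refine sum_congr rfl fun k hk => ?_
    rw [add_tsub_cancel_right, Nat.cast_sub (mem_range_succ_iff.mp hk)]
  rw [sum_congr rfl partial_fractions, ← sum_div, sum_add_distrib, ← oddHarmonic, reflect]
  have : (n : K) + 1 ≠ 0 := Nat.cast_add_one_ne_zero n
  field_simp
  ring

theorem factorial_div_doubleFactorial_succ [CharZero K] (n : ℕ) :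
    ((n + 1)! : K) / (2 * ((2 * (n + 1) + 1)‼ : K)) =
      (n ! : K) / (2 * ((2 * n + 1)‼ : K)) * ((n + 1) / (2 * n + 3)) := by
  rw [show 2 * (n + 1) + 1 = 2 * n + 1 + 2 by ring, Nat.doubleFactorial_add_two,
    Nat.factorial_succ]
  have hD : ((2 * n + 1)‼ : K) ≠ 0 := by exact_mod_cast (Nat.doubleFactorial_pos _).ne'
  have h₃ : 2 * (n : K) + 3 ≠ 0 := by exact_mod_cast Nat.succ_ne_zero (2 * n + 2)
  push_cast
  field_simp
  ring

theorem catalan_kernel_of_step [CharZero K] (H c : ℕ → K)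
    (hH : ∀ n, H (n + 1) = H n + 1 / (2 * (n : K) + 3))
    (hc : ∀ n, c n = (n ! : K) / (2 * ((2 * n + 1)‼ : K)) * H n) (n : ℕ) :
    ((n : K) + 1) * ((n : K) + 2) * c n - 4 * ((n : K) + 2) ^ 2 * c (n + 1)
      + (2 * (n : K) + 5) ^ 2 * c (n + 2) = 0 := by
  set a : K := (n ! : K) / (2 * ((2 * n + 1)‼ : K))
  have hc₀ : c n = a * H n := hc n
  have hc₁ : c (n + 1) = a * ((n + 1) / (2 * n + 3)) * (H n + 1 / (2 * n + 3)) := by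
    rw [hc, factorial_div_doubleFactorial_succ, hH]
  have hc₂ : c (n + 2) = a * ((n + 1) / (2 * n + 3)) * ((n + 2) / (2 * n + 5)) *
      (H n + 1 / (2 * n + 3) + 1 / (2 * n + 5)) := by
    rw [hc, factorial_div_doubleFactorial_succ, factorial_div_doubleFactorial_succ, hH, hH]
    push_cast
    ring
  have h₃ : (n : K) * 2 + 3 ≠ 0 := by exact_mod_cast Nat.succ_ne_zero (n * 2 + 2)
  have h₅ : (n : K) * 2 + 5 ≠ 0 := by exact_mod_cast Nat.succ_ne_zero (n * 2 + 4)
  rw [hc₀, hc₁, hc₂]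
  field_simp
  ring

/-- Let `g n = ∑_{k=0}^n 1/((2k+1)(2(n-k)+1))` (the coefficient sequence of
`₂F₁(1/2,1;3/2;z)²`) and `c n = (n+1)!/(2·(2n+1)!!)·g n`. Then `c` satisfies the
printed Catalan kernel recurrence. -/
theorem catalan_kernel_from_gauss_square (g c : ℕ → ℚ)
    (hg : ∀ n : ℕ, g n = ∑ k ∈ Finset.range (n + 1),
      1 / ((2 * (k : ℚ) + 1) * (2 * ((n : ℚ) - k) + 1)))
    (hc : ∀ n : ℕ, c n =
      (Nat.factorial (n + 1) : ℚ) / (2 * (Nat.doubleFactorial (2 * n + 1) : ℚ)) * g n) :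
    ∀ n : ℕ, ((n : ℚ) + 1) * ((n : ℚ) + 2) * c n
      - 4 * ((n : ℚ) + 2) ^ 2 * c (n + 1)
      + (2 * (n : ℚ) + 5) ^ 2 * c (n + 2) = 0 := by
  refine catalan_kernel_of_step (oddHarmonic ℚ) c oddHarmonic_succ fun n => ?_
  have : (n : ℚ) + 1 ≠ 0 := Nat.cast_add_one_ne_zero n
  rw [hc, hg, sum_one_div_odd_mul_odd_reflect, Nat.factorial_succ]
  push_cast
  field_simp
end

section
/- Let a, b, c ∈ ℚ and let f be a formal power series in z over ℚ satisfying the Euler-form Gauss hypergeometric equation (1−z)·θ(θf) = a·b·z·f + ((a+b)·z − c + 1)·θf. Then g = f² satisfies the third-order Euler equation 2·θ(θ + (c−1))(θ + (2c−2))·g − z·Q(θ)·g + 2·z²·(θ + (a+b))(θ + 2a)(θ + 2b)·g = 0, where Q(T) = 4T³ + 6(a+b+c−1)T² + 2(4ab + 4ac + 4bc − 3a − 3b − c + 1)T + 4ab(2c−1), and for a polynomial P, P(θ)·g means the result of applying the corresponding polynomial expression in the operator θ to g (shifts such as θ + λ act by (θ + λ)h = θh + λ·h), with multiplication by z or z²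 performed after applying the θ-polynomial. -/
open PowerSeries

/-- The Euler operator `θf = z·f'` on formal power series over `ℚ`. -/
noncomputable def eulerOp (f : PowerSeries ℚ) : PowerSeries ℚ :=
  X * derivative ℚ f

/-- Shifted Euler operator `(θ + λ)h = θh + λ·h`. -/
noncomputable def eulerOpShift (lam : ℚ) (f : PowerSeries ℚ) : PowerSeries ℚ :=
  eulerOp f + C lam * f

/-! Since `θ` is a derivation, `θ g`, `θ² g`, `θ³ g` for `g = f²` are polynomials in
`f, θf, θ²f, θ³f`. The Gauss equation and its image under `θ` express `(1 - z)θ²f` and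
`(1 - z)θ³f` through lower derivatives, and the claimed operator applied to `f²` is a
polynomial combination of these two equations. -/

noncomputable def eulerDerivation : Derivation ℚ (PowerSeries ℚ) (PowerSeries ℚ) :=
  (X : PowerSeries ℚ) • derivative ℚ

lemma eulerDerivation_apply (f : PowerSeries ℚ) : eulerDerivation f = eulerOp f := rfl

lemma eulerOp_add (f g : PowerSeries ℚ) : eulerOp (f + g) = eulerOp f + eulerOp g := by
  simpa only [eulerDerivation_apply] using map_add eulerDerivation f g

lemma eulerOp_sub (f g : PowerSeries ℚ) : eulerOp (f - g) = eulerOp f - eulerOp g := by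
  simpa only [eulerDerivation_apply] using map_sub eulerDerivation f g

lemma eulerOp_mul (f g : PowerSeries ℚ) :
    eulerOp (f * g) = eulerOp f * g + f * eulerOp g := by
  simp only [← eulerDerivation_apply, Derivation.leibniz, smul_eq_mul]
  ring

lemma eulerOp_C (q : ℚ) : eulerOp (C q) = 0 := by
  simpa only [eulerDerivation_apply, algebraMap_eq] using eulerDerivation.map_algebraMap q

lemma eulerOp_one : eulerOp (1 : PowerSeries ℚ) = 0 := by
  simpa using eulerOp_C 1

lemma eulerOp_two : eulerOp (2 : PowerSeries ℚ) = 0 := by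
  simpa [map_ofNat] using eulerOp_C 2

lemma eulerOp_X : eulerOp (X : PowerSeries ℚ) = X := by
  simp [eulerOp]

lemma eulerOp_C_mul (q : ℚ) (f : PowerSeries ℚ) : eulerOp (C q * f) = C q * eulerOp f := by
  simp [eulerOp_mul, eulerOp_C]

lemma eulerOp_sq (f : PowerSeries ℚ) : eulerOp (f ^ 2) = 2 * f * eulerOp f := by
  rw [pow_two, eulerOp_mul]
  ring

lemma eulerOp_eulerOp_sq (f : PowerSeries ℚ) :
    eulerOp (eulerOp (f ^ 2)) = 2 * eulerOp f ^ 2 + 2 * f * eulerOp (eulerOp f) := by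
  simp only [eulerOp_sq, eulerOp_mul, eulerOp_two]
  ring

lemma eulerOp_eulerOp_eulerOp_sq (f : PowerSeries ℚ) :
    eulerOp (eulerOp (eulerOp (f ^ 2)))
      = 6 * eulerOp f * eulerOp (eulerOp f) + 2 * f * eulerOp (eulerOp (eulerOp f)) := by
  rw [eulerOp_eulerOp_sq]
  simp only [eulerOp_add, eulerOp_mul, eulerOp_two, pow_two]
  ring

lemma eulerOp_gauss_equation {a b c : ℚ} {f : PowerSeries ℚ}
    (hf : (1 - X) * eulerOp (eulerOp f)
        = C (a * b) * X * f + (C (a + b) * X - C c + 1) * eulerOp f) :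
    (1 - X) * eulerOp (eulerOp (eulerOp f)) - X * eulerOp (eulerOp f)
      = C (a * b) * X * (f + eulerOp f)
        + C (a + b) * X * eulerOp f + (C (a + b) * X - C c + 1) * eulerOp (eulerOp f) := by
  have h := congrArg eulerOp hf
  simp only [eulerOp_mul, eulerOp_add, eulerOp_sub, eulerOp_C, eulerOp_one, eulerOp_X] at h
  linear_combination h

/-- **Chaundy–Vidūnas equation for the Gauss square.** If `f` satisfies the Euler-form
Gauss hypergeometric equation, then `g = f²` satisfies
`2·θ(θ+(c-1))(θ+(2c-2))·g - z·Q(θ)·g + 2z²·(θ+(a+b))(θ+2a)(θ+2b)·g = 0`, where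
`Q(T) = 4T³ + 6(a+b+c-1)T² + 2(4ab+4ac+4bc-3a-3b-c+1)T + 4ab(2c-1)`. -/
theorem gauss_square_third_order_euler_equation (a b c : ℚ) (f g : PowerSeries ℚ)
    (hf : (1 - X) * eulerOp (eulerOp f)
        = C (a * b) * X * f
          + (C (a + b) * X - C c + 1) * eulerOp f)
    (hg : g = f ^ 2) :
    2 * eulerOp (eulerOpShift (c - 1) (eulerOpShift (2 * c - 2) g))
      - X * (4 * eulerOp (eulerOp (eulerOp g))
          + C (6 * (a + b + c - 1)) * eulerOp (eulerOp g)
          + C (2 * (4 * a * b + 4 * a * c + 4 * b * c - 3 * a - 3 * b - c + 1)) * eulerOp g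
          + C (4 * a * b * (2 * c - 1)) * g)
      + 2 * X ^ 2 *
          eulerOpShift (a + b) (eulerOpShift (2 * a) (eulerOpShift (2 * b) g)) = 0 := by
  subst hg
  have hf' := eulerOp_gauss_equation hf
  simp only [eulerOpShift, eulerOp_add, eulerOp_C_mul]
  rw [eulerOp_eulerOp_eulerOp_sq, eulerOp_eulerOp_sq, eulerOp_sq]
  simp only [map_mul, map_add, map_sub, map_one, map_ofNat] at hf hf' ⊢
  linear_combination
      (12 * eulerOp f - 12 * X * eulerOp f - 8 * f + 4 * X * f + 8 * C c * f
        - 8 * C a * X * f - 8 * C b * X * f) * hf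
    + (4 * f - 4 * X * f) * hf'
end

section
/- Let α, β, γ₁, γ₂, λ ∈ ℚ satisfy the Fuchs relation α + β + γ₁ + γ₂ = 1. In the field ℚ(z) of rational functions over ℚ, define p = (1−α)/z + (1−β)/(z−1), q = γ₁γ₂/(z(z−1)), and C_λ = λ/(z²(z−1)) + (4γ₁γ₂(γ₁+γ₂) − λ)/(z(z−1)²). Then: (1) 2p² + p′ + 4q = (1−α)(1−2α)/z² + (1−β)(1−2β)/(z−1)² + 4(αβ + γ₁γ₂ + γ₁ + γ₂)/(z(z−1)), where p′ denotes the derivative of p; and (2) the identity 4pq + 2q′ = C_λ holds if and only if λ = 2γ₁γ₂(1−2α). -/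
/-!
With `d z = 1` the derivatives are `p' = -(1-α)/z² - (1-β)/(z-1)²` and
`q' = -γ₁γ₂(2z-1)/(z²(z-1)²)`. After eliminating `β` by the Fuchs relation and clearing the
denominator `z²(z-1)²`, (1) is a polynomial identity, and `4pq + 2q' - C_λ` collapses to
`(λ - 2γ₁γ₂(1-2α))/(z²(z-1)²)`, which vanishes exactly when `λ = 2γ₁γ₂(1-2α)`.
-/

open RatFunc

namespace Derivation

section Field

variable {R K : Type*} [CommRing R] [Field K] [Algebra R K] (D : Derivation R K K)

theorem leibniz_const_div {a : K} (ha : D a = 0) (b : K) : D (a / b) = -(a * D b / b ^ 2) := by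
  rw [leibniz_div, ha, smul_eq_mul, smul_eq_mul, smul_eq_mul]
  ring

variable {D}

theorem map_div_add_div_sub_one {z a b : K} (hz : D z = 1) (ha : D a = 0) (hb : D b = 0) :
    D (a / z + b / (z - 1)) = -(a / z ^ 2) - b / (z - 1) ^ 2 := by
  rw [map_add, D.leibniz_const_div ha, D.leibniz_const_div hb, map_sub, hz, map_one_eq_zero]
  ring

theorem map_div_mul_sub_one {z c : K} (hz : D z = 1) (hc : D c = 0) :
    D (c / (z * (z - 1))) = -(c * (2 * z - 1) / (z ^ 2 * (z - 1) ^ 2)) := by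
  rw [D.leibniz_const_div hc, leibniz, map_sub, hz, map_one_eq_zero, smul_eq_mul, smul_eq_mul]
  ring

end Field

theorem map_ratHom_apply {K M : Type*} [Field K] [Algebra ℚ K] [AddCommMonoid M] [Module K M]
    [Module ℚ M] (D : Derivation ℚ K M) (f : ℚ →+* K) (q : ℚ) : D (f q) = 0 := by
  rw [eq_ratCast f, ← eq_ratCast (algebraMap ℚ K)]
  exact D.map_algebraMap q

end Derivation

theorem RatFunc.X_sub_C_ne_zero {K : Type*} [Field K] (a : K) : (X : RatFunc K) - C a ≠ 0 := by
  rw [← algebraMap_X, ← algebraMap_C, ← map_sub]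
  exact algebraMap_ne_zero (Polynomial.X_sub_C_ne_zero a)

/-- **Accessory-parameter condition for the Sym²(Gauss) locus.**
In `ℚ(z)` with its standard derivation `d` (determined by `d z = 1`), let
`p = (1-α)/z + (1-β)/(z-1)`, `q = γ₁γ₂/(z(z-1))`, and
`C_λ = λ/(z²(z-1)) + (4γ₁γ₂(γ₁+γ₂)-λ)/(z(z-1)²)`, with Fuchs relation
`α+β+γ₁+γ₂ = 1`. Then
(1) `2p² + p' + 4q = (1-α)(1-2α)/z² + (1-β)(1-2β)/(z-1)² + 4(αβ+γ₁γ₂+γ₁+γ₂)/(z(z-1))`,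
and (2) `4pq + 2q' = C_λ` holds iff `λ = 2γ₁γ₂(1-2α)`. -/
theorem sym2_gauss_accessory_parameter (α β γ₁ γ₂ lam : ℚ)
    (hFuchs : α + β + γ₁ + γ₂ = 1)
    (d : Derivation ℚ (RatFunc ℚ) (RatFunc ℚ)) (hd : d RatFunc.X = 1)
    (z p q Cl : RatFunc ℚ)
    (hz : z = RatFunc.X)
    (hp : p = RatFunc.C (1 - α) / z + RatFunc.C (1 - β) / (z - 1))
    (hq : q = RatFunc.C (γ₁ * γ₂) / (z * (z - 1)))
    (hCl : Cl = RatFunc.C lam / (z ^ 2 * (z - 1))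
        + RatFunc.C (4 * γ₁ * γ₂ * (γ₁ + γ₂) - lam) / (z * (z - 1) ^ 2)) :
    (2 * p ^ 2 + d p + 4 * q
      = RatFunc.C ((1 - α) * (1 - 2 * α)) / z ^ 2
        + RatFunc.C ((1 - β) * (1 - 2 * β)) / (z - 1) ^ 2
        + RatFunc.C (4 * (α * β + γ₁ * γ₂ + γ₁ + γ₂)) / (z * (z - 1))) ∧
    ((4 * p * q + 2 * d q = Cl) ↔ lam = 2 * γ₁ * γ₂ * (1 - 2 * α)) := by
  obtain rfl : β = 1 - α - γ₁ - γ₂ := by linarith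
  subst hz
  have hX : (X : RatFunc ℚ) ≠ 0 := X_ne_zero
  have hX1 : (X : RatFunc ℚ) - 1 ≠ 0 := by simpa using X_sub_C_ne_zero (1 : ℚ)
  have hC := d.map_ratHom_apply C
  refine ⟨?_, ?_⟩
  · rw [hp, hq, Derivation.map_div_add_div_sub_one hd (hC _) (hC _)]
    simp only [map_sub, map_add, map_mul, map_one, map_ofNat]
    field_simp
    ring
  · have hdefect : 4 * p * q + 2 * d q - Cl
        = C (lam - 2 * γ₁ * γ₂ * (1 - 2 * α)) / (X ^ 2 * (X - 1) ^ 2) := by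
      rw [hp, hq, hCl, Derivation.map_div_mul_sub_one hd (hC _)]
      simp only [map_sub, map_add, map_mul, map_one, map_ofNat]
      field_simp
      ring
    rw [← sub_eq_zero, hdefect, div_eq_zero_iff, or_iff_left (by positivity),
      map_eq_zero_iff C C_injective, sub_eq_zero]
end

section
/- Let f be a formal power series in z over ℚ satisfying z(1−z)·f″ + (1 − (3/2)z)·f′ − (1/18)·f = 0 (the Gauss hypergeometric equation with parameters a = 1/6, b = 1/3, c = 1). Let φ be the formal power series in x over ℚ with zero constant term determined by (1−4x)³·φ = 108x², let F = f∘φ be the substitution of φ into f, let s = ∑_{m≥0} binom(2m,m)·x^m (so that (1−4x)·s² = 1), and let y = s·F. Then x(1−4x)(1−16x)·y″ + (1 − 30x + 128x²)·y′ − 2(1−8x)·y = 0. -/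
/-!
Writing `u = 1 - 4X`, the relations `u³φ = 108X²` and `u³(1 - φ) = (1 - 16X)(1 + 2X)²` give
`u⁴φ' = 216X(1 + 2X)` and `u⁵φ'' = 216(1 + 16X + 16X²)`, so after multiplying by `u¹²` the
hypergeometric equation pulled back along `φ` has polynomial coefficients; it equals
`419904 X²(1 + 2X)³` times a second-order operator applied to `F = f ∘ φ`. The gauge factor
`s = u^(-1/2)` satisfies `u s' = 2s`, and conjugating that operator by `s` gives `u` times the
Heun operator of the Domb numbers.
-/

open PowerSeries

namespace PowerSeries

variable {R : Type*} [CommRing R]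

instance [CharZero R] : CharZero R⟦X⟧ :=
  (constantCoeff (R := R)).charZero

@[simp]
theorem derivative_ofNat (n : ℕ) [n.AtLeastTwo] :
    d⁄dX R (no_index (OfNat.ofNat n : R⟦X⟧)) = 0 := by
  rw [← Nat.cast_ofNat]
  exact Derivation.map_natCast _ n

theorem coeff_subst_eq_sum_range {φ : R⟦X⟧} (hφ : constantCoeff φ = 0) (f : R⟦X⟧) (n : ℕ) :
    coeff n (f.subst φ) = ∑ m ∈ Finset.range (n + 1), coeff m f * coeff n (φ ^ m) := by
  simp_rw [coeff_subst' (.of_constantCoeff_zero' hφ), smul_eq_mul]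
  refine finsum_eq_sum_of_support_subset _ fun m hm => ?_
  rw [Finset.coe_range, Set.mem_Iio, Nat.lt_succ_iff]
  by_contra! hnm
  exact hm (by simp [X_pow_dvd_iff.mp (pow_dvd_pow_of_dvd (X_dvd_iff.mpr hφ) m) n hnm])

theorem subst_of_linear_ode {p q r f φ : R⟦X⟧} (hφ : constantCoeff φ = 0)
    (h : p * d⁄dX R (d⁄dX R f) + q * d⁄dX R f + r * f = 0) :
    p.subst φ * (d⁄dX R φ * d⁄dX R (d⁄dX R (f.subst φ))
        - d⁄dX R (d⁄dX R φ) * d⁄dX R (f.subst φ))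
      + q.subst φ * d⁄dX R φ ^ 2 * d⁄dX R (f.subst φ)
      + r.subst φ * d⁄dX R φ ^ 3 * f.subst φ = 0 := by
  have ha : HasSubst φ := .of_constantCoeff_zero' hφ
  have hsubst := congrArg (substAlgHom ha) h
  simp only [map_add, map_mul, map_zero, coe_substAlgHom] at hsubst
  rw [derivative_subst ha, Derivation.leibniz, derivative_subst ha, smul_eq_mul, smul_eq_mul]
  linear_combination d⁄dX R φ ^ 3 * hsubst

theorem mul_derivative_of_mul_sq_eq_one {u s : R⟦X⟧} (h : u * s ^ 2 = 1) :
    2 * u * d⁄dX R s = -d⁄dX R u * s := by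
  have hd := congrArg (d⁄dX R) h
  simp only [Derivation.leibniz, Derivation.leibniz_pow, smul_eq_mul, nsmul_eq_mul,
    Derivation.map_one_eq_zero] at hd
  -- `s` is a unit with inverse `u * s`
  linear_combination (u * s) * hd - (2 * u * d⁄dX R s + d⁄dX R u * s) * h

end PowerSeries

section DombHeun

variable {R : Type*} [CommRing R]

theorem belyi_derivative {φ : R⟦X⟧} (hφ : (1 - 4 * X) ^ 3 * φ = 108 * X ^ 2) :
    (1 - 4 * X) ^ 4 * d⁄dX R φ = 216 * X * (1 + 2 * X) := by
  have hd := congrArg (d⁄dX R) hφ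
  simp only [Derivation.leibniz, Derivation.leibniz_pow, smul_eq_mul, nsmul_eq_mul, map_sub,
    Derivation.map_one_eq_zero, derivative_X, derivative_ofNat, Nat.cast_ofNat] at hd
  linear_combination (1 - 4 * X) * hd + 12 * hφ

theorem belyi_derivative_two {φ : R⟦X⟧} (hφ : (1 - 4 * X) ^ 3 * φ = 108 * X ^ 2) :
    (1 - 4 * X) ^ 5 * d⁄dX R (d⁄dX R φ) = 216 * (1 + 16 * X + 16 * X ^ 2) := by
  have h1 := belyi_derivative hφ
  have hd := congrArg (d⁄dX R) h1
  simp only [Derivation.leibniz, Derivation.leibniz_pow, smul_eq_mul, nsmul_eq_mul, map_add,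
    map_sub, Derivation.map_one_eq_zero, derivative_X, derivative_ofNat, Nat.cast_ofNat] at hd
  linear_combination (1 - 4 * X) * hd + 16 * h1

theorem hypergeometric_pullback_belyi [IsDomain R] [CharZero R] {φ F : R⟦X⟧}
    (hφ : (1 - 4 * X) ^ 3 * φ = 108 * X ^ 2)
    (hE : 18 * φ * (1 - φ) * (d⁄dX R φ * d⁄dX R (d⁄dX R F) - d⁄dX R (d⁄dX R φ) * d⁄dX R F)
      + (18 - 27 * φ) * d⁄dX R φ ^ 2 * d⁄dX R F + -1 * d⁄dX R φ ^ 3 * F = 0) :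
    X * (1 - 4 * X) ^ 2 * (1 - 16 * X) * d⁄dX R (d⁄dX R F)
      + (1 - 4 * X) * (1 - 26 * X + 64 * X ^ 2) * d⁄dX R F - 24 * X * F = 0 := by
  have hcleared : (1 - 4 * X) ^ 12 * (18 * φ * (1 - φ)
        * (d⁄dX R φ * d⁄dX R (d⁄dX R F) - d⁄dX R (d⁄dX R φ) * d⁄dX R F)
        + (18 - 27 * φ) * d⁄dX R φ ^ 2 * d⁄dX R F + -1 * d⁄dX R φ ^ 3 * F)
      = 18 * ((1 - 4 * X) ^ 3 * φ) * ((1 - 4 * X) ^ 3 - (1 - 4 * X) ^ 3 * φ)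
          * ((1 - 4 * X) ^ 4 * d⁄dX R φ * (1 - 4 * X) ^ 2 * d⁄dX R (d⁄dX R F)
            - (1 - 4 * X) ^ 5 * d⁄dX R (d⁄dX R φ) * (1 - 4 * X) * d⁄dX R F)
        + (18 * (1 - 4 * X) ^ 3 - 27 * ((1 - 4 * X) ^ 3 * φ))
          * ((1 - 4 * X) ^ 4 * d⁄dX R φ) ^ 2 * (1 - 4 * X) * d⁄dX R F
        - ((1 - 4 * X) ^ 4 * d⁄dX R φ) ^ 3 * F := by
    ring
  rw [hE, mul_zero, hφ, belyi_derivative hφ, belyi_derivative_two hφ] at hcleared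
  have hM : (419904 * X ^ 2 * (1 + 2 * X) ^ 3 : R⟦X⟧) ≠ 0 := by
    have h12X : (1 + 2 * X : R⟦X⟧) ≠ 0 := fun h => by simpa using congrArg constantCoeff h
    exact mul_ne_zero (mul_ne_zero (by norm_num) (pow_ne_zero _ X_ne_zero)) (pow_ne_zero _ h12X)
  refine (mul_eq_zero.mp ?_).resolve_left hM
  linear_combination -hcleared

theorem derivative_of_one_sub_four_X_mul_sq [IsDomain R] [CharZero R] {s : R⟦X⟧}
    (hs : (1 - 4 * X) * s ^ 2 = 1) : (1 - 4 * X) * d⁄dX R s = 2 * s := by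
  have h := mul_derivative_of_mul_sq_eq_one hs
  simp only [map_sub, Derivation.map_one_eq_zero, Derivation.leibniz, derivative_X, smul_eq_mul,
    derivative_ofNat] at h
  have h2 : (2 : R⟦X⟧) * ((1 - 4 * X) * d⁄dX R s - 2 * s) = 0 := by linear_combination h
  exact sub_eq_zero.mp ((mul_eq_zero.mp h2).resolve_left two_ne_zero)

theorem heun_gauge {s F : R⟦X⟧} (hs : (1 - 4 * X) * d⁄dX R s = 2 * s) :
    (1 - 4 * X) * (X * (1 - 4 * X) * (1 - 16 * X) * d⁄dX R (d⁄dX R (s * F))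
      + (1 - 30 * X + 128 * X ^ 2) * d⁄dX R (s * F) - 2 * (1 - 8 * X) * (s * F))
      = s * (X * (1 - 4 * X) ^ 2 * (1 - 16 * X) * d⁄dX R (d⁄dX R F)
        + (1 - 4 * X) * (1 - 26 * X + 64 * X ^ 2) * d⁄dX R F - 24 * X * F) := by
  have hs2 : (1 - 4 * X) * d⁄dX R (d⁄dX R s) = 6 * d⁄dX R s := by
    have hd := congrArg (d⁄dX R) hs
    simp only [Derivation.leibniz, smul_eq_mul, map_sub,
      Derivation.map_one_eq_zero, derivative_X, derivative_ofNat] at hd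
    linear_combination hd
  simp only [Derivation.leibniz, smul_eq_mul, map_add]
  linear_combination (X * (1 - 4 * X) * (1 - 16 * X) * F) * hs2
    + ((1 - 30 * X + 128 * X ^ 2) * F + 2 * X * (1 - 4 * X) * (1 - 16 * X) * d⁄dX R F
      + 6 * X * (1 - 16 * X) * F) * hs

end DombHeun

theorem domb_heun_equation_general (f φ F s y : PowerSeries ℚ)
    (hf : X * (1 - X) * derivative ℚ (derivative ℚ f)
        + (1 - C (3 / 2) * X) * derivative ℚ f - C (1 / 18) * f = 0)
    (hφ0 : constantCoeff φ = 0)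
    (hφ : (1 - 4 * X) ^ 3 * φ = 108 * X ^ 2)
    (hF : ∀ n : ℕ, coeff n F
        = ∑ m ∈ Finset.range (n + 1), coeff m f * coeff n (φ ^ m))
    (hs4 : (1 - 4 * X) * s ^ 2 = 1)
    (hy : y = s * F) :
    X * (1 - 4 * X) * (1 - 16 * X) * derivative ℚ (derivative ℚ y)
      + (1 - 30 * X + 128 * X ^ 2) * derivative ℚ y
      - 2 * (1 - 8 * X) * y = 0 := by
  have hFφ : F = f.subst φ := ext fun n => by rw [hF, coeff_subst_eq_sum_range hφ0]
  have hgauss : 18 * X * (1 - X) * d⁄dX ℚ (d⁄dX ℚ f) + (18 - 27 * X) * d⁄dX ℚ f + -1 * f = 0 := by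
    have h27 : (18 : ℚ⟦X⟧) * C (3 / 2) = 27 := by
      rw [← map_ofNat C 18, ← map_ofNat C 27, ← map_mul]; norm_num
    have h1 : (18 : ℚ⟦X⟧) * C (1 / 18) = 1 := by
      rw [← map_ofNat C, ← map_mul]; norm_num
    linear_combination 18 * hf + (X * d⁄dX ℚ f) * h27 + f * h1
  have hE := subst_of_linear_ode hφ0 hgauss
  rw [← hFφ, ← coe_substAlgHom (.of_constantCoeff_zero' hφ0)] at hE
  simp only [map_sub, map_mul, map_neg, map_one, map_ofNat, substAlgHom_X] at hE
  have hu : (1 - 4 * X : ℚ⟦X⟧) ≠ 0 := fun h => by simpa using congrArg constantCoeff h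
  subst hy
  refine (mul_eq_zero.mp ?_).resolve_left hu
  rw [heun_gauge (derivative_of_one_sub_four_X_mul_sq hs4), hypergeometric_pullback_belyi hφ hE,
    mul_zero]

/-- **Domb closure via Belyi pullback: the Heun equation.**
Let `f` satisfy the Gauss equation `z(1-z)f'' + (1-(3/2)z)f' - (1/18)f = 0`
(parameters `(1/6, 1/3, 1)`), let `φ` be the power series with zero constant term
determined by `(1-4x)³·φ = 108x²`, let `F = f∘φ` (substitution, given coefficientwise
by `coeff n F = ∑_{m≤n} coeff m f · coeff n (φ^m)`), let
`s = ∑ binom(2m,m)·x^m` (so that `(1-4x)·s² = 1`), and let `y = s·F`. Then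
`x(1-4x)(1-16x)·y'' + (1-30x+128x²)·y' - 2(1-8x)·y = 0`. -/
theorem domb_heun_equation (f φ F s y : PowerSeries ℚ)
    (hf : X * (1 - X) * derivative ℚ (derivative ℚ f)
        + (1 - C (3 / 2) * X) * derivative ℚ f - C (1 / 18) * f = 0)
    (hφ0 : constantCoeff φ = 0)
    (hφ : (1 - 4 * X) ^ 3 * φ = 108 * X ^ 2)
    (hF : ∀ n : ℕ, coeff n F
        = ∑ m ∈ Finset.range (n + 1), coeff m f * coeff n (φ ^ m))
    (hs : s = PowerSeries.mk fun m => ((2 * m).choose m : ℚ))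
    (hs4 : (1 - 4 * X) * s ^ 2 = 1)
    (hy : y = s * F) :
    X * (1 - 4 * X) * (1 - 16 * X) * derivative ℚ (derivative ℚ y)
      + (1 - 30 * X + 128 * X ^ 2) * derivative ℚ y
      - 2 * (1 - 8 * X) * y = 0 :=
  domb_heun_equation_general f φ F s y hf hφ0 hφ hF hs4 hy
end

section
/- Let p be a prime with p ≠ 3, let r ∈ {1, 2}, and let N be a natural number. Then the p-adic valuation of N! is at most the p-adic valuation of the product ∏_{j=1}^N (3j − r); equivalently, the p-part of N! divides ∏_{j=1}^N (3j − r). -/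
/-!
Shifting `j` by one turns the product into `∏_{j<N} (3j + b)` with `b = 3 - r`. Modulo
`n = p^{v_p(N!)}` the factor `3` is invertible, so choosing `c ∈ ℕ` with `3c ≡ b (mod n)` gives
`∏_{j<N} (3j + b) ≡ 3^N · c(c+1)⋯(c+N-1) (mod n)`, and a rising factorial of length `N` is
divisible by `N!`, hence by `n`. Since the product is nonzero, divisibility by `p^{v_p(N!)}`
bounds its valuation.
-/

open Finset

theorem Nat.dvd_prod_range_mul_add_of_dvd_factorial {n a b N : ℕ} (ha : a.Coprime n)
    (hn : n ∣ N.factorial) : n ∣ ∏ j ∈ range N, (a * j + b) := by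
  have : NeZero n := ⟨fun h => N.factorial_ne_zero (Nat.eq_zero_of_zero_dvd (h ▸ hn))⟩
  set c : ℕ := ((a : ZMod n)⁻¹ * b).val
  have hac : (a : ZMod n) * c = b := by
    rw [ZMod.natCast_zmod_val, ← mul_assoc, ZMod.coe_mul_inv_eq_one a ha, one_mul]
  have hfactor : ∀ j : ℕ, ((a * j + b : ℕ) : ZMod n) = a * ((c + j : ℕ) : ZMod n) := by
    intro j
    push_cast
    rw [mul_add, hac, add_comm]
  have hrising : ((c.ascFactorial N : ℕ) : ZMod n) = 0 :=
    (ZMod.natCast_eq_zero_iff _ n).mpr (hn.trans (c.factorial_dvd_ascFactorial N))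
  rw [Nat.ascFactorial_eq_prod_range, Nat.cast_prod] at hrising
  rw [← ZMod.natCast_eq_zero_iff, Nat.cast_prod]
  simp_rw [hfactor]
  rw [prod_mul_distrib, hrising, mul_zero]

theorem Nat.prod_Icc_mul_sub_eq_prod_range {a r : ℕ} (hr : r ≤ a) (N : ℕ) :
    ∏ j ∈ Icc 1 N, (a * j - r) = ∏ j ∈ range N, (a * j + (a - r)) := by
  rw [← Ico_add_one_right_eq_Icc, prod_Ico_eq_prod_range, Nat.add_sub_cancel]
  refine prod_congr rfl fun j _ => ?_
  rw [mul_add, mul_one]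
  omega

/-- **Counting lemma for the Belyi-scan integrality proofs.**
For a prime `p ≠ 3`, `r ∈ {1,2}`, and `N : ℕ`, the `p`-adic valuation of `N!` is at
most that of `∏_{j=1}^N (3j-r)`; equivalently, the `p`-part of `N!` divides the
product. -/
theorem padic_valuation_factorial_le_three_j_sub_r
    (p : ℕ) (hp : p.Prime) (hp3 : p ≠ 3) (r : ℕ) (hr : r = 1 ∨ r = 2) (N : ℕ) :
    padicValNat p (Nat.factorial N) ≤ padicValNat p (∏ j ∈ Finset.Icc 1 N, (3 * j - r)) ∧
    p ^ padicValNat p (Nat.factorial N) ∣ ∏ j ∈ Finset.Icc 1 N, (3 * j - r) := by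
  have : Fact p.Prime := ⟨hp⟩
  have hr2 : r ≤ 2 := by omega
  have hcop : Nat.Coprime 3 (p ^ padicValNat p N.factorial) :=
    ((Nat.coprime_primes Nat.prime_three hp).mpr hp3.symm).pow_right _
  have hdvd : p ^ padicValNat p N.factorial ∣ ∏ j ∈ Icc 1 N, (3 * j - r) := by
    rw [Nat.prod_Icc_mul_sub_eq_prod_range (by omega)]
    exact Nat.dvd_prod_range_mul_add_of_dvd_factorial hcop pow_padicValNat_dvd
  have hne : ∏ j ∈ Icc 1 N, (3 * j - r) ≠ 0 :=
    prod_ne_zero_iff.mpr fun j hj => by rw [mem_Icc] at hj; omega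
  exact ⟨(padicValNat_dvd_iff_le hne).mp hdvd, hdvd⟩
end

section
/- For every natural number m, the factorial (2m+1)! divides 3^m · ∏_{j=1}^{2m} (3j − 2). -/
/-!
Compare `p`-adic valuations, after reindexing the product as `∏_{j < 2m} (3j + 1)`.
For `p = 3`, `v₃((2m+1)!) ≤ (2m+1)/2 = m`. For `p ≠ 3`, every power `q = p^i` is prime to `3`,
so `q ∣ 3j + 1` singles out one residue class of `j` mod `q`, which meets `range (2m)` at least
`⌊(2m+1)/q⌋` times; by Legendre's formula this bounds `v_p((2m+1)!)` by `v_p` of the product.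
-/

open Finset

namespace Nat

theorem exists_modEq_iff_dvd_mul_add {a q : ℕ} (hq : 0 < q) (ha : Coprime a q) (b : ℕ) :
    ∃ v, ∀ j, q ∣ a * j + b ↔ j ≡ v [MOD q] := by
  have : NeZero q := ⟨hq.ne'⟩
  set u := ZMod.unitOfCoprime a ha
  refine ⟨(-(b : ZMod q) * ↑u⁻¹).val, fun j => ?_⟩
  rw [← ZMod.natCast_eq_zero_iff, ← ZMod.natCast_eq_natCast_iff, ZMod.natCast_zmod_val,
    Units.eq_mul_inv_iff_mul_eq, ZMod.coe_unitOfCoprime, eq_neg_iff_add_eq_zero, mul_comm]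
  push_cast
  rfl

theorem div_le_card_filter_range_dvd_mul_add {a q : ℕ} (ha : Coprime a q) (n b : ℕ) :
    n / q ≤ #{j ∈ range n | q ∣ a * j + b} := by
  rcases q.eq_zero_or_pos with rfl | hq
  · simp
  obtain ⟨v, hv⟩ := exists_modEq_iff_dvd_mul_add hq ha b
  simp only [hv, ← count_eq_card_filter_range, count_modEq_card n hq v]
  exact le_self_add

theorem succ_div_le_card_filter_range_dvd_three_mul_add_one {q : ℕ} (h3 : Coprime 3 q)
    (hq : q ≠ 1) (n : ℕ) :
    (2 * n + 1) / q ≤ #{j ∈ range (2 * n) | q ∣ 3 * j + 1} := by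
  by_cases hlast : q ∣ 3 * (2 * n) + 1
  · -- `q` divides `3(2n+1) - (3 · 2n + 1) = 2` if it also divides `2n + 1`
    have hodd : ¬ q ∣ 2 * n + 1 := by
      intro hdvd
      have h2 : q ∣ 2 := (Nat.dvd_add_right hlast).1 (by simpa [mul_add] using hdvd.mul_left 3)
      rcases (Nat.dvd_prime prime_two).1 h2 with rfl | rfl
      · exact hq rfl
      · omega
    rw [succ_div_of_not_dvd hodd]
    exact div_le_card_filter_range_dvd_mul_add h3 _ _
  · calc (2 * n + 1) / q ≤ #{j ∈ range (2 * n + 1) | q ∣ 3 * j + 1} :=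
          div_le_card_filter_range_dvd_mul_add h3 _ _
      _ = #{j ∈ range (2 * n) | q ∣ 3 * j + 1} := by
          rw [range_add_one, filter_insert, if_neg hlast]

theorem factorization_factorial_le_factorization_prod {ι : Type*} {p n : ℕ} (hp : p.Prime)
    {s : Finset ι} {f : ι → ℕ} (hf : ∀ j ∈ s, f j ≠ 0)
    (hcount : ∀ i, 1 ≤ i → n / p ^ i ≤ #{j ∈ s | p ^ i ∣ f j}) :
    n.factorial.factorization p ≤ (∏ j ∈ s, f j).factorization p := by
  set b := n + ∑ j ∈ s, f j + 1
  have hb : b < p ^ b := Nat.lt_pow_self hp.one_lt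
  calc n.factorial.factorization p = ∑ i ∈ Ico 1 b, n / p ^ i :=
        factorization_factorial hp ((log_le_self p n).trans_lt (by omega))
    _ ≤ ∑ i ∈ Ico 1 b, #{j ∈ s | p ^ i ∣ f j} :=
        sum_le_sum fun i hi => hcount i (mem_Ico.1 hi).1
    _ = ∑ j ∈ s, #{i ∈ Ico 1 b | p ^ i ∣ f j} :=
        sum_card_bipartiteAbove_eq_sum_card_bipartiteBelow _
    _ = ∑ j ∈ s, (f j).factorization p := sum_congr rfl fun j hj =>
        (factorization_eq_card_pow_dvd_of_lt hp (pos_of_ne_zero (hf j hj))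
          ((single_le_sum (fun _ _ => zero_le _) hj).trans_lt (by omega))).symm
    _ = (∏ j ∈ s, f j).factorization p := by
        rw [factorization_prod hf, Finsupp.finsetSum_apply]

end Nat

/-- **Integrality for row #3 of the Belyi-pullback scan.**
For every natural number `m`, the factorial `(2m+1)!` divides
`3^m · ∏_{j=1}^{2m} (3j-2)`. -/
theorem factorial_dvd_three_pow_mul_prod (m : ℕ) :
    Nat.factorial (2 * m + 1) ∣ 3 ^ m * ∏ j ∈ Finset.Icc 1 (2 * m), (3 * j - 2) := by
  have hprod : ∏ j ∈ Icc 1 (2 * m), (3 * j - 2) = ∏ j ∈ range (2 * m), (3 * j + 1) := by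
    rw [← Ico_add_one_right_eq_Icc, prod_Ico_eq_prod_range]
    exact prod_congr rfl fun j _ => by omega
  have hP : ∏ j ∈ range (2 * m), (3 * j + 1) ≠ 0 := prod_ne_zero_iff.2 fun _ _ => by omega
  rw [hprod]
  refine (Nat.factorization_prime_le_iff_dvd (Nat.factorial_ne_zero _) (by positivity)).1
    fun p hp => ?_
  rcases eq_or_ne p 3 with rfl | hp3
  · calc (2 * m + 1).factorial.factorization 3 ≤ (2 * m + 1) / (3 - 1) :=
          Nat.factorization_factorial_le_div_pred Nat.prime_three _
      _ = (3 ^ m).factorization 3 := by simp [Nat.prime_three.factorization_self]; omega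
      _ ≤ _ := Nat.factorization_le_factorization_mul_left hP 3
  · have h3p : Nat.Coprime 3 p := (Nat.coprime_primes Nat.prime_three hp).2 hp3.symm
    calc (2 * m + 1).factorial.factorization p
        ≤ (∏ j ∈ range (2 * m), (3 * j + 1)).factorization p :=
          Nat.factorization_factorial_le_factorization_prod hp (fun _ _ => by omega) fun i hi =>
            Nat.succ_div_le_card_filter_range_dvd_three_mul_add_one (h3p.pow_right i)
              (Nat.one_lt_pow (by omega) hp.one_lt).ne' m
      _ ≤ _ := Nat.factorization_le_factorization_mul_right (by positivity) p
end

section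
/- For every natural number m and for each r ∈ {1, 2}, the factorial m! divides 9^m · ∏_{j=1}^{m} (3j − r). -/
/-!
Split `m! = 3^e · q` with `q` coprime to `3`. Legendre's bound gives `e ≤ m/2`, so `3^e ∣ 9^m`.
For `q`: since `3` is invertible modulo `q`, the progression `3j + b` is congruent modulo `q` to
`3(j + k)` for some `k`, so the product is `3^m` times the rising factorial `k(k+1)⋯(k+m-1)`
modulo `q`, and that rising factorial is divisible by `m!`, hence by `q`.
-/

open Finset Nat

theorem dvd_prod_mul_add_of_coprime {a q : ℕ} (m b : ℕ) (ha : a.Coprime q) (hq : q ∣ m !) :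
    q ∣ ∏ j ∈ range m, (a * j + b) := by
  have : NeZero q := ⟨by rintro rfl; exact factorial_ne_zero m (zero_dvd_iff.mp hq)⟩
  obtain ⟨k, hk⟩ : ∃ k : ℕ, (a : ZMod q) * k = b :=
    ⟨(((ZMod.unitOfCoprime a ha)⁻¹ : (ZMod q)ˣ) * b : ZMod q).val, by
      rw [ZMod.natCast_zmod_val, ← mul_assoc, ← ZMod.coe_unitOfCoprime a ha, Units.mul_inv,
        one_mul]⟩
  have hasc : q ∣ k.ascFactorial m := hq.trans (factorial_dvd_ascFactorial k m)
  rw [← ZMod.natCast_eq_zero_iff] at hasc ⊢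
  calc ((∏ j ∈ range m, (a * j + b) : ℕ) : ZMod q)
      = ∏ j ∈ range m, (a : ZMod q) * (k + j) := by
        push_cast
        refine prod_congr rfl fun j _ => ?_
        rw [← hk]
        ring
    _ = (a : ZMod q) ^ m * (k.ascFactorial m : ℕ) := by
        rw [prod_mul_distrib, prod_const, card_range, ascFactorial_eq_prod_range]
        push_cast
        rfl
    _ = 0 := by rw [hasc, mul_zero]

/-- **Integrality for rows #5 and #13 of the Belyi-pullback scan.**
For every natural number `m` and each `r ∈ {1,2}`, the factorial `m!` divides
`9^m · ∏_{j=1}^m (3j-r)`. -/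
theorem factorial_dvd_nine_pow_mul_prod (m r : ℕ) (hr : r = 1 ∨ r = 2) :
    Nat.factorial m ∣ 9 ^ m * ∏ j ∈ Finset.Icc 1 m, (3 * j - r) := by
  have h3 : Nat.Prime 3 := Nat.prime_three
  have hprod : ∏ j ∈ Icc 1 m, (3 * j - r) = ∏ j ∈ range m, (3 * j + (3 - r)) := by
    rw [← Ico_add_one_right_eq_Icc, prod_Ico_eq_prod_range, add_tsub_cancel_right]
    exact prod_congr rfl fun j _ => by omega
  have hval : (m !).factorization 3 ≤ 2 * m :=
    (factorization_factorial_le_div_pred h3 m).trans (by omega)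
  rw [hprod, ← ordProj_mul_ordCompl_eq_self (m !) 3]
  refine mul_dvd_mul ?_ (dvd_prod_mul_add_of_coprime m _
    (coprime_ordCompl h3 (factorial_ne_zero m)) (ordCompl_dvd _ _))
  rw [show 9 = 3 ^ 2 by rfl, ← pow_mul]
  exact pow_dvd_pow 3 hval
end
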